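/- For integer N ≥ 2, b > 0 and β = b·I_{N/2-1}(b)/I_{N/2}(b) (i.e. the supercritical relation b = β f(b)), the quantity 1 - ((N-1)/b)·f(b) - f(b)², where f(b) = I_{N/2}(b)/I_{N/2-1}(b), is strictly positive. -/

import Mathlib

open MeasureTheory Real Filter Asymptotics Set

/-- Modified Bessel function of the first kind,
`I_nu(x) = sum_m (x/2)^(2m+nu) / (m! * Gamma (m+nu+1))`. -/
noncomputable def besselI (nu x : Real) : Real :=
  tsum (fun m : Nat => (x / 2) ^ (2 * (m : Real) + nu) / ((m.factorial : Real) * Real.Gamma ((m : Real) + nu + 1)))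

open Finset Polynomial Topology

/-!
With `F_a(s) = ∑ sⁱ / (i! Γ(a + i))` one has `I_μ(b) = (b/2)^μ F_{μ+1}(b²/4)`, so for `ν = N/2`
the claim reads `2 F_ν² - (2ν - 1) F_ν F_{ν+1} - 2 s F_{ν+1}² > 0` at `s = b²/4`.
By Chu–Vandermonde, the Cauchy product of `F_a` and `F_b` has the closed-form coefficients
`Γ(a + b + 2n - 1) / (n! Γ(a + n) Γ(b + n) Γ(a + b + n - 1))`. With them the power series of the
left-hand side has constant term `1 / (ν Γ(ν)²)`, and its coefficient of `sⁿ`, `n ≥ 1`, is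
`2ν - 1 > 0` times a positive number.
-/

theorem Real.Gamma_add_nat_eq_choose {x : ℝ} (hx : 0 < x) (n : ℕ) :
    Gamma (x + n) = n.factorial * Ring.choose (x + n - 1) n * Gamma x := by
  induction n generalizing x with
  | zero => simp
  | succ n ih =>
    have key := ih (x := x + 1) (by linarith)
    rw [Ring.choose_eq_smul, smul_eq_mul, Gamma_add_one hx.ne',
      show x + 1 + (n : ℝ) = x + (n + 1) by ring] at key
    rw [Ring.choose_eq_smul, smul_eq_mul, descPochhammer_succ_right, smeval_mul, smeval_sub,
      smeval_X, smeval_natCast, Nat.cast_succ, key]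
    have : (n.factorial : ℝ) ≠ 0 := by positivity
    push_cast [Nat.factorial_succ, nsmul_eq_mul]
    field_simp
    ring

noncomputable def besselCoeff (a : ℝ) (i : ℕ) : ℝ := ((i.factorial : ℝ) * Gamma (a + i))⁻¹

noncomputable def besselProdCoeff (a b : ℝ) (n : ℕ) : ℝ :=
  ∑ ij ∈ antidiagonal n, besselCoeff a ij.1 * besselCoeff b ij.2

noncomputable def besselSeries (a s : ℝ) : ℝ := ∑' i, besselCoeff a i * s ^ i

theorem besselCoeff_pos {a : ℝ} (ha : 0 < a) (i : ℕ) : 0 < besselCoeff a i := by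
  unfold besselCoeff
  have := Gamma_pos_of_pos (by positivity : 0 < a + i)
  positivity

theorem besselCoeff_succ {a : ℝ} (ha : 0 < a) (i : ℕ) :
    besselCoeff a (i + 1) = besselCoeff a i / ((i + 1) * (a + i)) := by
  have := Gamma_pos_of_pos (by positivity : 0 < a + i)
  rw [besselCoeff, besselCoeff, Nat.cast_succ, ← add_assoc, Gamma_add_one (by positivity),
    Nat.factorial_succ, Nat.cast_mul, Nat.cast_succ]
  field_simp

theorem tendsto_besselCoeff_ratio {a : ℝ} (ha : 0 < a) :
    Tendsto (fun i : ℕ => besselCoeff a (i + 1) / besselCoeff a i) atTop (𝓝 0) := by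
  have hinf : Tendsto (fun i : ℕ => ((i : ℝ) + 1) * (a + i)) atTop atTop :=
    (tendsto_atTop_add_const_right _ 1 tendsto_natCast_atTop_atTop).atTop_mul_atTop₀
      (tendsto_atTop_add_const_left _ a tendsto_natCast_atTop_atTop)
  refine hinf.inv_tendsto_atTop.congr fun i => ?_
  rw [besselCoeff_succ ha, div_div_cancel_left' (besselCoeff_pos ha i).ne', Pi.inv_apply]

theorem summable_besselCoeff_mul_pow {a : ℝ} (ha : 0 < a) (s : ℝ) :
    Summable fun i => besselCoeff a i * s ^ i := by
  have hpos : Summable fun i => besselCoeff a i * (|s| + 1) ^ i := by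
    refine summable_of_ratio_test_tendsto_lt_one (l := 0) one_pos
      (Eventually.of_forall fun i => (mul_pos (besselCoeff_pos ha i) (by positivity)).ne') ?_
    have := (tendsto_besselCoeff_ratio ha).mul_const (|s| + 1)
    rw [zero_mul] at this
    refine this.congr fun i => ?_
    have := besselCoeff_pos ha i
    have := besselCoeff_pos ha (i + 1)
    rw [Real.norm_of_nonneg (by positivity), Real.norm_of_nonneg (by positivity)]
    field_simp
    ring
  refine hpos.of_norm_bounded fun i => ?_
  rw [norm_mul, norm_pow, Real.norm_of_nonneg (besselCoeff_pos ha i).le, Real.norm_eq_abs]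
  exact mul_le_mul_of_nonneg_left (pow_le_pow_left₀ (abs_nonneg s) (by linarith) i)
    (besselCoeff_pos ha i).le

theorem besselSeries_pos {a s : ℝ} (ha : 0 < a) (hs : 0 ≤ s) : 0 < besselSeries a s :=
  (summable_besselCoeff_mul_pow ha s).tsum_pos
    (fun i => mul_nonneg (besselCoeff_pos ha i).le (pow_nonneg hs i)) 0
    (by simpa using besselCoeff_pos ha 0)

theorem hasSum_besselProdCoeff {a b : ℝ} (ha : 0 < a) (hb : 0 < b) (s : ℝ) :
    HasSum (fun n => besselProdCoeff a b n * s ^ n) (besselSeries a s * besselSeries b s) := by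
  have hfa := (summable_besselCoeff_mul_pow ha s).norm
  have hfb := (summable_besselCoeff_mul_pow hb s).norm
  have hterm : ∀ n, ∑ ij ∈ antidiagonal n,
      besselCoeff a ij.1 * s ^ ij.1 * (besselCoeff b ij.2 * s ^ ij.2)
        = besselProdCoeff a b n * s ^ n := fun n => by
    rw [besselProdCoeff, sum_mul]
    refine sum_congr rfl fun ij hij => ?_
    rw [← mem_antidiagonal.mp hij, pow_add]
    ring
  simp only [besselSeries, tsum_mul_tsum_eq_tsum_sum_antidiagonal_of_summable_norm hfa hfb,
    ← hterm]
  exact (summable_norm_sum_mul_antidiagonal_of_summable_norm hfa hfb).of_norm.hasSum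

theorem besselI_eq {b : ℝ} (hb : 0 < b) (μ : ℝ) :
    besselI μ b = (b / 2) ^ μ * besselSeries (μ + 1) ((b / 2) ^ 2) := by
  rw [besselI, besselSeries, ← tsum_mul_left]
  congr 1 with m
  rw [besselCoeff, rpow_add (by positivity),
    show 2 * (m : ℝ) = ((2 * m : ℕ) : ℝ) by push_cast; rfl, rpow_natCast, pow_mul,
    show (m : ℝ) + μ + 1 = μ + 1 + m by ring, div_eq_mul_inv]
  ring

theorem besselCoeff_mul_besselCoeff_mul_Gamma {a b : ℝ} (ha : 0 < a) (hb : 0 < b) (i j : ℕ) :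
    besselCoeff a i * besselCoeff b j * (Gamma (a + ↑(i + j)) * Gamma (b + ↑(i + j))) =
      Ring.choose (b + ↑(i + j) - 1) i * Ring.choose (a + ↑(i + j) - 1) j := by
  have hA := Gamma_add_nat_eq_choose (x := a + i) (by positivity) j
  have hB := Gamma_add_nat_eq_choose (x := b + j) (by positivity) i
  have := Gamma_pos_of_pos (by positivity : 0 < a + i)
  have := Gamma_pos_of_pos (by positivity : 0 < b + j)
  rw [Nat.cast_add, ← add_assoc, hA, add_comm (i : ℝ), ← add_assoc, hB]
  unfold besselCoeff
  field_simp

theorem besselProdCoeff_mul_Gamma {a b : ℝ} (ha : 0 < a) (hb : 0 < b) (n : ℕ) :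
    besselProdCoeff a b n * (Gamma (a + n) * Gamma (b + n)) =
      Ring.choose (a + b + 2 * n - 2) n := by
  rw [show a + b + 2 * (n : ℝ) - 2 = (b + n - 1) + (a + n - 1) by ring,
    Ring.add_choose_eq n (Commute.all _ _), besselProdCoeff, sum_mul]
  refine sum_congr rfl fun ij hij => ?_
  rw [← mem_antidiagonal.mp hij]
  exact besselCoeff_mul_besselCoeff_mul_Gamma ha hb ij.1 ij.2

theorem besselProdCoeff_eq {a b : ℝ} (ha : 0 < a) (hb : 0 < b) (hab : 1 < a + b) (n : ℕ) :
    besselProdCoeff a b n =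
      Gamma (a + b + 2 * n - 1) /
        (n.factorial * Gamma (a + n) * Gamma (b + n) * Gamma (a + b + n - 1)) := by
  have hx : 0 < a + b + n - 1 := by linarith [n.cast_nonneg (α := ℝ)]
  have hΓ := Gamma_add_nat_eq_choose hx n
  rw [show a + b + n - 1 + n = a + b + 2 * (n : ℝ) - 1 by ring,
    show a + b + 2 * (n : ℝ) - 1 - 1 = a + b + 2 * n - 2 by ring,
    ← besselProdCoeff_mul_Gamma ha hb] at hΓ
  have := Gamma_pos_of_pos (by positivity : 0 < a + n)
  have := Gamma_pos_of_pos (by positivity : 0 < b + n)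
  have := Gamma_pos_of_pos hx
  rw [hΓ]
  field_simp

theorem besselProdCoeff_pos {a b : ℝ} (ha : 0 < a) (hb : 0 < b) (n : ℕ) :
    0 < besselProdCoeff a b n :=
  sum_pos (fun ij _ => mul_pos (besselCoeff_pos ha ij.1) (besselCoeff_pos hb ij.2))
    ⟨(0, n), by simp⟩

theorem besselProdCoeff_zero (a b : ℝ) : besselProdCoeff a b 0 = (Gamma a * Gamma b)⁻¹ := by
  simp [besselProdCoeff, besselCoeff, mul_comm]

theorem besselProdCoeff_turan_zero {ν : ℝ} (hν : 0 < ν) :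
    2 * besselProdCoeff ν ν 0 - (2 * ν - 1) * besselProdCoeff ν (ν + 1) 0 =
      besselProdCoeff ν (ν + 1) 0 := by
  have := Gamma_pos_of_pos hν
  simp only [besselProdCoeff_zero, Gamma_add_one hν.ne']
  field_simp
  ring

theorem besselProdCoeff_turan_succ {ν : ℝ} (hν : 1 / 2 < ν) (n : ℕ) :
    2 * besselProdCoeff ν ν (n + 1) - (2 * ν - 1) * besselProdCoeff ν (ν + 1) (n + 1)
      - 2 * besselProdCoeff (ν + 1) (ν + 1) n =
      (2 * ν - 1) * besselProdCoeff (ν + 1) (ν + 1) n / ((n + 1) * (ν + n + 1)) := by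
  have hν0 : 0 < ν := by linarith
  have hG := Gamma_pos_of_pos (by positivity : 0 < 2 * ν + 2 * n + 1)
  have hg := Gamma_pos_of_pos (by positivity : 0 < ν + n + 1)
  have hh := Gamma_pos_of_pos (by positivity : 0 < 2 * ν + n)
  have hfac : ((n + 1).factorial : ℝ) = (n + 1) * n.factorial := by
    push_cast [Nat.factorial_succ]; ring
  have rG : Gamma (2 * ν + 2 * n + 2) = (2 * ν + 2 * n + 1) * Gamma (2 * ν + 2 * n + 1) := by
    rw [← Gamma_add_one (by positivity)]; ring_nf
  have rg : Gamma (ν + n + 2) = (ν + n + 1) * Gamma (ν + n + 1) := by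
    rw [← Gamma_add_one (by positivity)]; ring_nf
  have rh : Gamma (2 * ν + n + 1) = (2 * ν + n) * Gamma (2 * ν + n) := by
    rw [← Gamma_add_one (by positivity)]
  have hν1 : 0 < ν + 1 := by linarith
  rw [besselProdCoeff_eq hν0 hν0 (by linarith), besselProdCoeff_eq hν0 hν1 (by linarith),
    besselProdCoeff_eq hν1 hν1 (by linarith), hfac]
  push_cast
  rw [show ν + ν + 2 * ((n : ℝ) + 1) - 1 = 2 * ν + 2 * n + 1 by ring,
    show ν + (ν + 1) + 2 * ((n : ℝ) + 1) - 1 = 2 * ν + 2 * n + 2 by ring,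
    show ν + 1 + (ν + 1) + 2 * (n : ℝ) - 1 = 2 * ν + 2 * n + 1 by ring,
    show ν + ((n : ℝ) + 1) = ν + n + 1 by ring,
    show ν + 1 + ((n : ℝ) + 1) = ν + n + 2 by ring,
    show ν + 1 + (n : ℝ) = ν + n + 1 by ring,
    show ν + ν + ((n : ℝ) + 1) - 1 = 2 * ν + n by ring,
    show ν + (ν + 1) + ((n : ℝ) + 1) - 1 = 2 * ν + n + 1 by ring,
    show ν + 1 + (ν + 1) + (n : ℝ) - 1 = 2 * ν + n + 1 by ring, rG, rg, rh]
  field_simp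
  ring

theorem besselSeries_turan {ν s : ℝ} (hν : 1 / 2 < ν) (hs : 0 ≤ s) :
    (2 * ν - 1) * (besselSeries ν s * besselSeries (ν + 1) s)
      + 2 * s * besselSeries (ν + 1) s ^ 2 < 2 * besselSeries ν s ^ 2 := by
  have hν0 : 0 < ν := by linarith
  have hν1 : 0 < ν + 1 := by linarith
  set d : ℕ → ℝ :=
    fun n => 2 * besselProdCoeff ν ν n - (2 * ν - 1) * besselProdCoeff ν (ν + 1) n
  have hd : HasSum (fun n => d n * s ^ n) (2 * besselSeries ν s ^ 2
      - (2 * ν - 1) * (besselSeries ν s * besselSeries (ν + 1) s)) := by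
    rw [sq]
    exact (((hasSum_besselProdCoeff hν0 hν0 s).mul_left 2).sub
      ((hasSum_besselProdCoeff hν0 hν1 s).mul_left (2 * ν - 1))).congr_fun
        fun n => by simp only [d]; ring
  have hshift := (hasSum_nat_add_iff' 1).mpr hd
  have hsq : HasSum (fun n => 2 * besselProdCoeff (ν + 1) (ν + 1) n * s ^ (n + 1))
      (2 * s * besselSeries (ν + 1) s ^ 2) := by
    rw [sq]
    exact ((hasSum_besselProdCoeff hν1 hν1 s).mul_left (2 * s)).congr_fun
      fun n => by ring
  have hrest := (hshift.sub hsq).nonneg fun n => by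
    rw [← sub_mul, besselProdCoeff_turan_succ hν]
    have := besselProdCoeff_pos hν1 hν1 n
    have : 0 < 2 * ν - 1 := by linarith
    positivity
  have hd0 : 0 < d 0 := by
    simp only [d, besselProdCoeff_turan_zero hν0]
    exact besselProdCoeff_pos hν0 hν1 0
  simp only [sum_range_one, pow_zero, mul_one] at hrest
  linarith

theorem one_sub_besselI_ratio_pos {ν b : ℝ} (hν : 1 / 2 < ν) (hb : 0 < b) :
    0 < 1 - ((2 * ν - 1) / b) * (besselI ν b / besselI (ν - 1) b)
      - (besselI ν b / besselI (ν - 1) b) ^ 2 := by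
  have ht : 0 < b / 2 := by positivity
  have hturan := besselSeries_turan hν (sq_nonneg (b / 2))
  have hy := besselSeries_pos (by linarith) (sq_nonneg (b / 2)) (a := ν)
  rw [besselI_eq hb, besselI_eq hb, sub_add_cancel, rpow_sub_one ht.ne']
  set t := b / 2
  set x := besselSeries (ν + 1) (t ^ 2)
  set y := besselSeries ν (t ^ 2)
  have := rpow_pos_of_pos ht ν
  have hratio : t ^ ν * x / (t ^ ν / t * y) = t * x / y := by field_simp
  have hb' : b = 2 * t := by ring
  rw [hratio, hb', show 1 - (2 * ν - 1) / (2 * t) * (t * x / y) - (t * x / y) ^ 2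
      = (2 * y ^ 2 - (2 * ν - 1) * (y * x) - 2 * t ^ 2 * x ^ 2) / (2 * y ^ 2) by field_simp]
  exact div_pos (by linarith) (by positivity)

theorem stmt_17 (N : ℕ) (hN : 2 ≤ N) (b : ℝ) (hb : 0 < b) :
    0 < 1 - (((N : ℝ) - 1) / b) * (besselI ((N : ℝ) / 2) b / besselI ((N : ℝ) / 2 - 1) b)
        - (besselI ((N : ℝ) / 2) b / besselI ((N : ℝ) / 2 - 1) b) ^ 2 := by
  have hν : 1 / 2 < (N : ℝ) / 2 := by
    have : (2 : ℝ) ≤ N := by exact_mod_cast hN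
    linarith
  have := one_sub_besselI_ratio_pos hν hb
  rwa [show 2 * ((N : ℝ) / 2) - 1 = N - 1 by ring] at this
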